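/- For every countable ordinal α ≥ 1 there exists a Σ^0_{α+1}-measurable function F : 2^ℕ → 2^ℕ on Cantor space such that F is not countably Σ^0_α-measurable; that is, there is no countable partition {Q_i}_{i∈ℕ} of 2^ℕ such that every restriction F↾Q_i is Σ^0_α-measurable with respect to the subspace topology on Q_i. -/

import Mathlib

open Set Function TopologicalSpace

/-- The Borel hierarchy on a topological space `X`:
`SigmaSet X 1 s` iff `s` is open; for `α > 1`, `SigmaSet X α s` iff `s` is a countable
union `⋃ n, A n \ B n` where `A n` and `B n` are `SigmaSet X (β n)` for some `β n < α`. -/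
inductive SigmaSet (X : Type*) [TopologicalSpace X] : Ordinal.{0} → Set X → Prop
  | isOpen {s : Set X} (hs : IsOpen s) : SigmaSet X 1 s
  | iUnion (α : Ordinal.{0}) (β : ℕ → Ordinal.{0}) (A B : ℕ → Set X)
      (hβ : ∀ n, β n < α)
      (hA : ∀ n, SigmaSet X (β n) (A n)) (hB : ∀ n, SigmaSet X (β n) (B n)) :
      SigmaSet X α (⋃ n, A n \ B n)

/-- `Π⁰_α` sets: complements of `Σ⁰_α` sets. -/
def PiSet (X : Type*) [TopologicalSpace X] (α : Ordinal.{0}) (s : Set X) : Prop :=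
  SigmaSet X α sᶜ

/-- `Δ⁰_α` sets. -/
def DeltaSet (X : Type*) [TopologicalSpace X] (α : Ordinal.{0}) (s : Set X) : Prop :=
  SigmaSet X α s ∧ PiSet X α s

/-- `F : X → Y` is `Σ⁰_α`-measurable. -/
def SigmaMeasurable {X Y : Type*} [TopologicalSpace X] [TopologicalSpace Y]
    (α : Ordinal.{0}) (F : X → Y) : Prop :=
  ∀ U : Set Y, IsOpen U → SigmaSet X α (F ⁻¹' U)

/-- The restriction of `F : X → Y` to `Q ⊆ X` is `Σ⁰_α`-measurable with respect to the
subspace topology on `Q`. -/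
def SigmaMeasurableOn {X Y : Type*} [TopologicalSpace X] [TopologicalSpace Y]
    (α : Ordinal.{0}) (F : X → Y) (Q : Set X) : Prop :=
  SigmaMeasurable α (Q.restrict F)

/-- A countable partition of a type `X` (pieces may be empty). -/
def IsCountablePartition {X : Type*} (Q : ℕ → Set X) : Prop :=
  (⋃ i, Q i) = Set.univ ∧ Pairwise (Disjoint on Q)

/-- An ordinal is countable. -/
def Ordinal.IsCountable (α : Ordinal.{0}) : Prop := α.card ≤ Cardinal.aleph0

/-! ### Auxiliary lemmas on the Borel hierarchy -/

section Aux

variable {X Y : Type*} [TopologicalSpace X] [TopologicalSpace Y]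

theorem SigmaSet.one_le {α : Ordinal.{0}} {s : Set X} (h : SigmaSet X α s) : 1 ≤ α := by
  induction h with
  | isOpen hs => exact le_rfl
  | iUnion α β A B hβ hA hB ihA ihB => exact (ihA 0).trans (hβ 0).le

theorem sigmaSet_one_iff {s : Set X} : SigmaSet X 1 s ↔ IsOpen s := by
  constructor
  · intro h
    cases h with
    | isOpen hs => exact hs
    | iUnion α β A B hβ hA hB => exact absurd ((hA 0).one_le.trans_lt (hβ 0)) (lt_irrefl 1)
  · exact SigmaSet.isOpen

theorem SigmaSet.of_isOpen {α : Ordinal.{0}} (h1 : 1 ≤ α) {s : Set X} (hs : IsOpen s) :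
    SigmaSet X α s := by
  rcases h1.eq_or_lt with h | h
  · rw [← h]; exact .isOpen hs
  · have : s = ⋃ _ : ℕ, s \ (∅ : Set X) := by
      simp only [diff_empty]; exact (iUnion_const s).symm
    rw [this]
    exact .iUnion α (fun _ => 1) (fun _ => s) (fun _ => ∅) (fun _ => h)
      (fun _ => .isOpen hs) (fun _ => .isOpen isOpen_empty)

theorem SigmaSet.mono {α γ : Ordinal.{0}} {s : Set X} (h : SigmaSet X α s) (hle : α ≤ γ) :
    SigmaSet X γ s := by
  rcases hle.eq_or_lt with rfl | hlt
  · exact h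
  · have : s = ⋃ _ : ℕ, s \ (∅ : Set X) := by
      simp only [diff_empty]; exact (iUnion_const s).symm
    rw [this]
    exact .iUnion γ (fun _ => α) (fun _ => s) (fun _ => ∅) (fun _ => hlt)
      (fun _ => h) (fun _ => .of_isOpen h.one_le isOpen_empty)

theorem SigmaSet.norm {α : Ordinal.{0}} {s : Set X} (hα : 1 < α) (h : SigmaSet X α s) :
    ∃ (β : ℕ → Ordinal.{0}) (A B : ℕ → Set X),
      (∀ n, β n < α) ∧ (∀ n, SigmaSet X (β n) (A n)) ∧ (∀ n, SigmaSet X (β n) (B n)) ∧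
      s = ⋃ n, A n \ B n := by
  cases h with
  | isOpen hs => exact absurd hα (lt_irrefl 1)
  | iUnion α β A B hβ hA hB => exact ⟨β, A, B, hβ, hA, hB, rfl⟩

theorem SigmaSet.iUnion_nat {α : Ordinal.{0}} {s : ℕ → Set X}
    (h : ∀ n, SigmaSet X α (s n)) : SigmaSet X α (⋃ n, s n) := by
  rcases (h 0).one_le.eq_or_lt with h1 | h1
  · rw [← h1] at h ⊢
    exact .isOpen (isOpen_iUnion fun n => sigmaSet_one_iff.mp (h n))
  · choose β A B hβ hA hB hs using fun n => (h n).norm h1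
    have : (⋃ n, s n) =
        ⋃ m, A (Nat.unpair m).1 (Nat.unpair m).2 \ B (Nat.unpair m).1 (Nat.unpair m).2 := by
      ext x
      simp only [mem_iUnion]
      constructor
      · rintro ⟨n, hx⟩
        rw [hs n] at hx
        simp only [mem_iUnion] at hx
        obtain ⟨k, hk⟩ := hx
        exact ⟨Nat.pair n k, by simpa [Nat.unpair_pair] using hk⟩
      · rintro ⟨m, hm⟩
        refine ⟨(Nat.unpair m).1, ?_⟩
        rw [hs (Nat.unpair m).1]
        exact mem_iUnion.mpr ⟨(Nat.unpair m).2, hm⟩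
    rw [this]
    exact .iUnion α _ _ _ (fun m => hβ _ _) (fun m => hA _ _) (fun m => hB _ _)

theorem SigmaSet.union {α : Ordinal.{0}} {s t : Set X}
    (hs : SigmaSet X α s) (ht : SigmaSet X α t) : SigmaSet X α (s ∪ t) := by
  have : s ∪ t = ⋃ n : ℕ, if n = 0 then s else t := by
    ext x; simp only [mem_iUnion, mem_union]
    constructor
    · rintro (h | h)
      exacts [⟨0, by simp [h]⟩, ⟨1, by simp [h]⟩]
    · rintro ⟨n, hn⟩
      by_cases h : n = 0 <;> simp [h] at hn <;> tauto
  rw [this]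
  exact .iUnion_nat fun n => by by_cases h : n = 0 <;> simp [h] <;> assumption

theorem SigmaSet.inter : ∀ α : Ordinal.{0}, ∀ {s t : Set X},
    SigmaSet X α s → SigmaSet X α t → SigmaSet X α (s ∩ t) := by
  intro α
  induction α using Ordinal.induction with
  | h α IH =>
    intro s t hs ht
    rcases hs.one_le.eq_or_lt with h1 | h1
    · rw [← h1] at hs ht ⊢
      exact .isOpen ((sigmaSet_one_iff.mp hs).inter (sigmaSet_one_iff.mp ht))
    · obtain ⟨β, A, B, hβ, hA, hB, rfl⟩ := hs.norm h1
      obtain ⟨γ, C, D, hγ, hC, hD, rfl⟩ := ht.norm h1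
      have key : (⋃ n, A n \ B n) ∩ (⋃ n, C n \ D n) =
          ⋃ m, (A (Nat.unpair m).1 ∩ C (Nat.unpair m).2) \
            (B (Nat.unpair m).1 ∪ D (Nat.unpair m).2) := by
        ext x
        simp only [mem_inter_iff, mem_iUnion, mem_diff, mem_inter_iff, mem_union, not_or]
        constructor
        · rintro ⟨⟨n, hn1, hn2⟩, ⟨k, hk1, hk2⟩⟩
          exact ⟨Nat.pair n k, by simp [Nat.unpair_pair]; tauto⟩
        · rintro ⟨m, ⟨⟨h1, h2⟩, h3, h4⟩⟩
          exact ⟨⟨_, h1, h3⟩, ⟨_, h2, h4⟩⟩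
      rw [key]
      refine .iUnion α (fun m => max (β (Nat.unpair m).1) (γ (Nat.unpair m).2)) _ _
        (fun m => max_lt (hβ _) (hγ _)) (fun m => ?_) (fun m => ?_)
      · exact IH _ (max_lt (hβ _) (hγ _)) ((hA _).mono (le_max_left _ _))
          ((hC _).mono (le_max_right _ _))
      · exact ((hB _).mono (le_max_left _ _)).union ((hD _).mono (le_max_right _ _))

theorem SigmaSet.comap {α : Ordinal.{0}} {f : X → Y} (hf : Continuous f) {s : Set Y}
    (h : SigmaSet Y α s) : SigmaSet X α (f ⁻¹' s) := by
  induction h with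
  | isOpen hs => exact .isOpen (hs.preimage hf)
  | iUnion α β A B hβ hA hB ihA ihB =>
    rw [preimage_iUnion]
    exact .iUnion α β _ _ hβ ihA ihB

theorem SigmaSet.trace {Q : Set X} {α : Ordinal.{0}} {T : Set Q}
    (h : SigmaSet Q α T) : ∃ S : Set X, SigmaSet X α S ∧ T = Subtype.val ⁻¹' S := by
  induction h with
  | isOpen hs =>
    obtain ⟨S, hS, rfl⟩ := isOpen_induced_iff.mp hs
    exact ⟨S, .isOpen hS, rfl⟩
  | iUnion α β A B hβ hA hB ihA ihB =>
    choose SA hSA hA' using ihA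
    choose SB hSB hB' using ihB
    refine ⟨⋃ n, SA n \ SB n, .iUnion α β _ _ hβ hSA hSB, ?_⟩
    simp only [preimage_iUnion, preimage_diff]
    exact iUnion_congr fun n => by rw [hA' n, hB' n]

theorem SigmaSet.compl_succ {α : Ordinal.{0}} {s : Set X} (h : SigmaSet X α s) :
    SigmaSet X (α + 1) sᶜ := by
  have : sᶜ = ⋃ _ : ℕ, (univ : Set X) \ s := by
    rw [← compl_eq_univ_diff]; exact (iUnion_const _).symm
  rw [this]
  exact .iUnion (α + 1) (fun _ => α) (fun _ => univ) (fun _ => s)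
    (fun _ => by rw [Ordinal.add_one_eq_succ]; exact Order.lt_succ α)
    (fun _ => .of_isOpen h.one_le isOpen_univ) (fun _ => h)

theorem SigmaSet.iUnion_enc {ι : Type} [Encodable ι] {α : Ordinal.{0}} (h1 : 1 ≤ α)
    {s : ι → Set X} (h : ∀ i, SigmaSet X α (s i)) : SigmaSet X α (⋃ i, s i) := by
  have key : (⋃ i, s i) = ⋃ n : ℕ, (Encodable.decode (α := ι) n).elim ∅ s := by
    ext x; simp only [mem_iUnion]
    constructor
    · rintro ⟨i, hi⟩
      exact ⟨Encodable.encode i, by simp [Encodable.encodek, hi]⟩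
    · rintro ⟨n, hn⟩
      cases hd : Encodable.decode (α := ι) n with
      | none => rw [hd] at hn; simp at hn
      | some i => rw [hd] at hn; exact ⟨i, hn⟩
  rw [key]
  refine .iUnion_nat fun n => ?_
  cases Encodable.decode (α := ι) n with
  | none => exact .of_isOpen h1 isOpen_empty
  | some i => exact h i

theorem SigmaSet.iInter_fin {α : Ordinal.{0}} (h1 : 1 ≤ α) :
    ∀ n (s : Fin n → Set X), (∀ i, SigmaSet X α (s i)) → SigmaSet X α (⋂ i, s i) := by
  intro n
  induction n with
  | zero => intro s _; rw [iInter_of_empty]; exact .of_isOpen h1 isOpen_univ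
  | succ n ih =>
    intro s hs
    have : (⋂ i, s i) = s 0 ∩ ⋂ i : Fin n, s i.succ := by
      ext x; simp [Fin.forall_fin_succ]
    rw [this]
    exact SigmaSet.inter α (hs 0) (ih _ fun i => hs i.succ)

end Aux

/-! ### Cylinders in Cantor space -/

/-- Cylinder determined by a finite list of bits. -/
def Cyl (l : List Bool) : Set (ℕ → Bool) := {w | ∀ i, (h : i < l.length) → w i = l[i]}

theorem isOpen_cyl (l : List Bool) : IsOpen (Cyl l) := by
  have : Cyl l = ⋂ i : Fin l.length, {w : ℕ → Bool | w i = l[(i : ℕ)]} := by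
    ext w; simp [Cyl, Fin.forall_iff]
  rw [this]
  exact isOpen_iInter_of_finite fun i =>
    show IsOpen ((fun w : ℕ → Bool => w (i : ℕ)) ⁻¹' {l[(i : ℕ)]}) from
      (isOpen_discrete _).preimage (continuous_apply (i : ℕ))

theorem mem_cyl_ofFn (x : ℕ → Bool) (k : ℕ) : x ∈ Cyl (List.ofFn fun i : Fin k => x i) := by
  intro i hi
  simp only [List.length_ofFn] at hi
  simp [List.getElem_ofFn]

theorem exists_cyl {V : Set (ℕ → Bool)} (hV : IsOpen V) {x : ℕ → Bool} (hx : x ∈ V) :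
    ∃ l : List Bool, x ∈ Cyl l ∧ Cyl l ⊆ V := by
  obtain ⟨I, u, hu, hsub⟩ := isOpen_pi_iff.mp hV x hx
  classical
  set k := (I.sup id) + 1 with hk
  refine ⟨List.ofFn fun i : Fin k => x i, mem_cyl_ofFn x k, ?_⟩
  intro w hw
  apply hsub
  intro i hi
  have hik : i < k := by
    have h2 : i ≤ I.sup id := by simpa using Finset.le_sup (f := id) hi
    omega
  have : w i = x i := by
    have := hw i (by rw [List.length_ofFn]; exact hik)
    simpa only [List.getElem_ofFn] using this
  rw [this]
  exact (hu i hi).2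

/-! ### Pairing on Cantor space -/

/-- The `n`-th section of `x ∈ 2^ℕ`. -/
def sec (n : ℕ) (x : ℕ → Bool) : ℕ → Bool := fun k => x (Nat.pair n k)

/-- Glue countably many elements of `2^ℕ` into one. -/
def glue (g : ℕ → ℕ → Bool) : ℕ → Bool := fun m => g (Nat.unpair m).1 (Nat.unpair m).2

theorem sec_glue (g : ℕ → ℕ → Bool) (n : ℕ) : sec n (glue g) = g n :=
  funext fun k => by simp [sec, glue, Nat.unpair_pair]

theorem continuous_sec (n : ℕ) : Continuous (sec n) :=
  continuous_pi fun _ => continuous_apply _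

/-! ### A universal `Σ⁰_α` set -/

theorem exists_universal_sigmaSet : ∀ α : Ordinal.{0}, 1 ≤ α → α.IsCountable →
    ∃ U : Set ((ℕ → Bool) × (ℕ → Bool)), SigmaSet _ α U ∧
      ∀ S : Set (ℕ → Bool), SigmaSet _ α S → ∃ y, S = {x | (y, x) ∈ U} := by
  intro α
  induction α using Ordinal.induction with
  | h α IH =>
  intro h1 hc
  classical
  rcases h1.eq_or_lt with rfl | h1'
  · -- `α = 1`: universal open set
    refine ⟨⋃ l : List Bool,
      {p : (ℕ → Bool) × (ℕ → Bool) | p.1 (Encodable.encode l) = true} ∩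
        (fun p : (ℕ → Bool) × (ℕ → Bool) => p.2) ⁻¹' Cyl l, ?_, ?_⟩
    · refine .isOpen (isOpen_iUnion fun l => IsOpen.inter ?_ ((isOpen_cyl l).preimage
        continuous_snd))
      exact show IsOpen ((fun p : (ℕ → Bool) × (ℕ → Bool) => p.1 (Encodable.encode l)) ⁻¹'
        {true}) from (isOpen_discrete _).preimage ((continuous_apply _).comp continuous_fst)
    · intro S hS
      have hSopen : IsOpen S := sigmaSet_one_iff.mp hS
      refine ⟨fun m => if (∃ l : List Bool, Encodable.encode l = m ∧ Cyl l ⊆ S)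
        then true else false, ?_⟩
      ext x
      simp only [mem_iUnion, mem_setOf_eq, mem_inter_iff, mem_preimage]
      constructor
      · intro hx
        obtain ⟨l, hxl, hlS⟩ := exists_cyl hSopen hx
        exact ⟨l, by rw [if_pos ⟨l, rfl, hlS⟩], hxl⟩
      · rintro ⟨l, hl1, hl2⟩
        by_cases h : ∃ l' : List Bool, Encodable.encode l' = Encodable.encode l ∧ Cyl l' ⊆ S
        · obtain ⟨l', hl', hS'⟩ := h
          have : l' = l := Encodable.encode_injective hl'
          exact (this ▸ hS') hl2
        · rw [if_neg h] at hl1; exact absurd hl1 (by simp)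
  · -- `α > 1`
    set T : Set Ordinal.{0} := {γ | 1 ≤ γ ∧ γ < α} with hT
    have hTne : T.Nonempty := ⟨1, le_rfl, h1'⟩
    have hTc : T.Countable := by
      have hIio : (Set.Iio α).Countable := by
        rw [← Cardinal.le_aleph0_iff_set_countable, Ordinal.mk_Iio_ordinal,
          ← Cardinal.lift_aleph0.{1, 0}, Cardinal.lift_le]
        exact hc
      exact hIio.mono fun γ hγ => hγ.2
    obtain ⟨f, hf⟩ := hTc.exists_eq_range hTne
    have hfT : ∀ n, f n ∈ T := fun n => hf ▸ mem_range_self n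
    have hf1 : ∀ n, 1 ≤ f n := fun n => (hfT n).1
    have hfα : ∀ n, f n < α := fun n => (hfT n).2
    have hW : ∀ n, ∃ W : Set ((ℕ → Bool) × (ℕ → Bool)), SigmaSet _ (f n) W ∧
        ∀ S : Set (ℕ → Bool), SigmaSet _ (f n) S → ∃ y, S = {x | (y, x) ∈ W} :=
      fun n => IH (f n) (hfα n) (hf1 n)
        (le_trans (Ordinal.card_le_card (hfα n).le) hc)
    choose W hW1 hW2 using hW
    refine ⟨⋃ m, ((fun p : (ℕ → Bool) × (ℕ → Bool) => (sec (2 * m) p.1, p.2)) ⁻¹'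
          W (Nat.unpair m).1) \
        ((fun p : (ℕ → Bool) × (ℕ → Bool) => (sec (2 * m + 1) p.1, p.2)) ⁻¹'
          W (Nat.unpair m).1), ?_, ?_⟩
    · exact .iUnion α (fun m => f (Nat.unpair m).1) _ _ (fun m => hfα _)
        (fun m => (hW1 _).comap (((continuous_sec _).comp continuous_fst).prodMk
          continuous_snd))
        (fun m => (hW1 _).comap (((continuous_sec _).comp continuous_fst).prodMk
          continuous_snd))
    · intro S hS
      obtain ⟨γ, A, B, hγ, hA, hB, rfl⟩ := hS.norm h1'
      have hγT : ∀ n, γ n ∈ T := fun n => ⟨(hA n).one_le, hγ n⟩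
      have hj : ∀ n, ∃ j, f j = γ n := fun n => by
        have := hγT n; rw [hf] at this; exact this
      choose j hjf using hj
      have ha : ∀ n, ∃ a, A n = {x | (a, x) ∈ W (j n)} := fun n =>
        hW2 (j n) (A n) (by rw [hjf n]; exact hA n)
      have hb : ∀ n, ∃ b, B n = {x | (b, x) ∈ W (j n)} := fun n =>
        hW2 (j n) (B n) (by rw [hjf n]; exact hB n)
      choose a haA using ha
      choose b hbB using hb
      set ae : ℕ → (ℕ → Bool) := fun m =>
        if (Nat.unpair m).1 = j (Nat.unpair m).2 then a (Nat.unpair m).2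
        else fun _ => false with hae
      set be : ℕ → (ℕ → Bool) := fun m =>
        if (Nat.unpair m).1 = j (Nat.unpair m).2 then b (Nat.unpair m).2
        else fun _ => false with hbe
      set g : ℕ → ℕ → Bool := fun k => if k % 2 = 0 then ae (k / 2) else be (k / 2) with hg
      have hg1 : ∀ m, sec (2 * m) (glue g) = ae m := by
        intro m
        rw [sec_glue]
        have e1 : (2 * m) % 2 = 0 := by omega
        have e2 : (2 * m) / 2 = m := by omega
        simp [hg, e1, e2]
      have hg2 : ∀ m, sec (2 * m + 1) (glue g) = be m := by
        intro m
        rw [sec_glue]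
        have e1 : (2 * m + 1) % 2 = 1 := by omega
        have e2 : (2 * m + 1) / 2 = m := by omega
        simp [hg, e1, e2]
      refine ⟨glue g, ?_⟩
      ext x
      simp only [mem_iUnion, mem_setOf_eq, mem_diff, mem_preimage]
      constructor
      · rintro ⟨n, hx1, hx2⟩
        refine ⟨Nat.pair (j n) n, ?_, ?_⟩
        · rw [hg1]
          have : ae (Nat.pair (j n) n) = a n := by simp [hae, Nat.unpair_pair]
          rw [this]
          simp only [Nat.unpair_pair]
          rw [haA n] at hx1
          exact hx1
        · rw [hg2]
          have : be (Nat.pair (j n) n) = b n := by simp [hbe, Nat.unpair_pair]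
          rw [this]
          simp only [Nat.unpair_pair]
          rw [hbB n] at hx2
          exact hx2
      · rintro ⟨m, hx1, hx2⟩
        rw [hg1] at hx1
        rw [hg2] at hx2
        by_cases hcond : (Nat.unpair m).1 = j (Nat.unpair m).2
        · set n := (Nat.unpair m).2 with hn
          have e1 : ae m = a n := by simp [hae, ← hn, hcond]
          have e2 : be m = b n := by simp [hbe, ← hn, hcond]
          rw [e1, hcond] at hx1
          rw [e2, hcond] at hx2
          refine ⟨n, ?_, ?_⟩
          · rw [haA n]; exact hx1
          · rw [hbB n]; exact hx2
        · have e1 : ae m = fun _ => false := by simp [hae, hcond]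
          have e2 : be m = fun _ => false := by simp [hbe, hcond]
          rw [e1] at hx1
          rw [e2] at hx2
          exact absurd hx1 hx2

/-- For every countable ordinal `α ≥ 1` there is a `Σ⁰_{α+1}`-measurable function on Cantor
space which is not countably `Σ⁰_α`-measurable. -/
theorem exists_sigmaMeasurable_not_countably_decomposable (α : Ordinal.{0})
    (hα1 : 1 ≤ α) (hα : α.IsCountable) :
    ∃ F : (ℕ → Bool) → (ℕ → Bool), SigmaMeasurable (α + 1) F ∧
      ¬ ∃ Q : ℕ → Set (ℕ → Bool), IsCountablePartition Q ∧
        ∀ i, SigmaMeasurableOn α F (Q i) := by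
  classical
  obtain ⟨U, hU, hUniv⟩ := exists_universal_sigmaSet α hα1 hα
  set E : ℕ → Set (ℕ → Bool) := fun n => (fun x => (sec n x, x)) ⁻¹' U with hEdef
  have hE : ∀ n, SigmaSet (ℕ → Bool) α (E n) := fun n =>
    hU.comap ((continuous_sec n).prodMk continuous_id)
  set F : (ℕ → Bool) → (ℕ → Bool) := fun x n => if x ∈ E n then true else false with hFdef
  have hF : ∀ x n, F x n = true ↔ x ∈ E n := by
    intro x n
    by_cases h : x ∈ E n <;> simp [hFdef, h]
  have hα1' : (1 : Ordinal.{0}) ≤ α + 1 := hα1.trans (le_self_add)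
  have hαsucc : α ≤ α + 1 := le_self_add
  refine ⟨F, ?_, ?_⟩
  · -- F is Σ⁰_{α+1}-measurable
    intro V hV
    have key : F ⁻¹' V = ⋃ l : List Bool, if Cyl l ⊆ V then F ⁻¹' Cyl l else ∅ := by
      ext x
      simp only [mem_preimage, mem_iUnion]
      constructor
      · intro hx
        obtain ⟨l, h1, h2⟩ := exists_cyl hV hx
        exact ⟨l, by rw [if_pos h2]; exact h1⟩
      · rintro ⟨l, hl⟩
        by_cases h : Cyl l ⊆ V
        · rw [if_pos h] at hl; exact h hl
        · rw [if_neg h] at hl; exact absurd hl (notMem_empty x)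
    rw [key]
    refine SigmaSet.iUnion_enc hα1' fun l => ?_
    by_cases h : Cyl l ⊆ V
    · rw [if_pos h]
      have hcyl : F ⁻¹' Cyl l =
          ⋂ i : Fin l.length, (if l[(i : ℕ)] = true then E (i : ℕ) else (E (i : ℕ))ᶜ) := by
        ext x
        simp only [mem_preimage, Cyl, mem_setOf_eq, mem_iInter]
        constructor
        · intro hx i
          have hxi := hx (i : ℕ) i.isLt
          by_cases hb : l[(i : ℕ)] = true
          · rw [if_pos hb]
            exact (hF x (i : ℕ)).mp (by rw [hxi, hb])
          · rw [if_neg hb]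
            intro hxE
            have := (hF x (i : ℕ)).mpr hxE
            rw [hxi] at this
            exact hb this
        · intro hx i hi
          have hxi := hx ⟨i, hi⟩
          by_cases hb : l[i]'hi = true
          · rw [if_pos hb] at hxi
            rw [hb]
            exact (hF x i).mpr hxi
          · rw [if_neg hb] at hxi
            have h1 : F x i ≠ true := fun hc => hxi ((hF x i).mp hc)
            have h2 : l[i]'hi = false := by
              cases hb' : l[i]'hi
              · rfl
              · exact absurd hb' hb
            rw [h2]
            cases hc : F x i
            · rfl
            · exact absurd hc h1
      rw [hcyl]
      refine SigmaSet.iInter_fin hα1' _ _ fun i => ?_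
      by_cases hb : l[(i : ℕ)] = true
      · rw [if_pos hb]; exact (hE _).mono hαsucc
      · rw [if_neg hb]; exact (hE _).compl_succ
    · rw [if_neg h]; exact .of_isOpen hα1' isOpen_empty
  · -- F is not countably Σ⁰_α-measurable
    rintro ⟨Q, ⟨hcover, -⟩, hmeas⟩
    have hVopen : ∀ i : ℕ, IsOpen {w : ℕ → Bool | w i = false} := fun i =>
      show IsOpen ((fun w : ℕ → Bool => w i) ⁻¹' {false}) from
        (isOpen_discrete _).preimage (continuous_apply i)
    have htrace : ∀ i, ∃ T : Set (ℕ → Bool), SigmaSet (ℕ → Bool) α T ∧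
        (Q i).restrict F ⁻¹' {w : ℕ → Bool | w i = false} = Subtype.val ⁻¹' T :=
      fun i => (hmeas i _ (hVopen i)).trace
    choose T hT1 hT2 using htrace
    choose t ht using fun i => hUniv (T i) (hT1 i)
    set z : ℕ → Bool := glue t with hz
    obtain ⟨i0, hi0⟩ : ∃ i, z ∈ Q i := by
      have : z ∈ ⋃ i, Q i := hcover ▸ mem_univ z
      exact mem_iUnion.mp this
    have h3 : ((⟨z, hi0⟩ : Q i0) ∈ (Q i0).restrict F ⁻¹' {w : ℕ → Bool | w i0 = false}) ↔
        ((⟨z, hi0⟩ : Q i0) ∈ Subtype.val ⁻¹' T i0) := by rw [hT2 i0]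
    have hL : ((⟨z, hi0⟩ : Q i0) ∈ (Q i0).restrict F ⁻¹' {w : ℕ → Bool | w i0 = false}) ↔
        F z i0 = false := Iff.rfl
    have hR : ((⟨z, hi0⟩ : Q i0) ∈ Subtype.val ⁻¹' T i0) ↔ z ∈ E i0 := by
      have : z ∈ T i0 ↔ (t i0, z) ∈ U := by rw [ht i0]; rfl
      rw [mem_preimage]
      rw [this]
      have hsec : sec i0 z = t i0 := by rw [hz, sec_glue]
      simp only [hEdef, mem_preimage, hsec]
    have hcontra := (hL.symm.trans h3).trans hR
    by_cases hzE : z ∈ E i0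
    · have : F z i0 = true := (hF z i0).mpr hzE
      have : F z i0 = false := hcontra.mpr hzE
      simp_all
    · have h4 : F z i0 = false := by
        cases hc : F z i0
        · rfl
        · exact absurd ((hF z i0).mp hc) hzE
      exact hzE (hcontra.mp h4)
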